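/- arXiv:1612.02412 — 2 statements merged into one kernel-verified Lean document; each statement's English description precedes it below -/
import Mathlib

section
/- Necessity of Ω(m^{3/2}) shortcuts: there exist a constant c > 0 and an integer m₀ such that for every integer m ≥ m₀, every finite set S of shortcuts with diam(S) ≤ 2 + 1/m satisfies |S| ≥ c·m^{3/2}. -/
open Real MeasureTheory

/-- Arc distance between points on the unit circle, given by their polar angles:
the length of the shorter arc between them. -/
noncomputable def arcDist (p q : ℝ) : ℝ := ⨅ n : ℤ, |p - q + 2 * π * n|

/-- Euclidean length of the chord between the circle points with angles `u` and `v`. -/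
noncomputable def chordLen (u v : ℝ) : ℝ := 2 * Real.sin (arcDist u v / 2)

/-- A pair of angles is a genuine shortcut (chord) if its endpoints are distinct points. -/
def IsShortcut (s : ℝ × ℝ) : Prop := arcDist s.1 s.2 ≠ 0

/-- δ(a) = arcsin(a/2) - a/2. -/
noncomputable def sdelta (a : ℝ) : ℝ := Real.arcsin (a / 2) - a / 2

/-- Cost of a path that starts at `p`, fully traverses the listed chords in order
(travelling along the circle in between), and ends at `q`. -/
noncomputable def walkCost (q : ℝ) : ℝ → List (ℝ × ℝ) → ℝ
  | p, [] => arcDist p q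
  | p, e :: L => arcDist p e.1 + chordLen e.1 e.2 + walkCost q e.2 L

/-- Shortest-path distance from `p` to `q` using the shortcuts of `S`
(each usable in either orientation, and always traversed completely). -/
noncomputable def dS (S : Finset (ℝ × ℝ)) (p q : ℝ) : ℝ :=
  sInf {c | ∃ L : List (ℝ × ℝ), (∀ e ∈ L, e ∈ S ∨ (e.2, e.1) ∈ S) ∧ c = walkCost q p L}

/-- Diameter of the circle augmented with the shortcuts of `S`. -/
noncomputable def diamS (S : Finset (ℝ × ℝ)) : ℝ :=
  sSup {d | ∃ p q : ℝ, d = dS S p q}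

/-- diam(k): the optimal diameter achievable with `k` shortcuts. -/
noncomputable def diamK (k : ℕ) : ℝ :=
  sInf {d | ∃ S : Finset (ℝ × ℝ), S.card = k ∧ (∀ s ∈ S, IsShortcut s) ∧ d = diamS S}

/-- Distance from `p` to `q` when a single shortcut with endpoints `u`, `v` is available. -/
noncomputable def dOne (u v p q : ℝ) : ℝ :=
  min (arcDist p q)
    (min (arcDist p u + chordLen u v + arcDist v q)
      (arcDist p v + chordLen u v + arcDist u q))

/-- Two angles represent the same point of the circle. -/
def SamePoint (p q : ℝ) : Prop := arcDist p q = 0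

/-- Two pairs of angles represent the same chord of the circle. -/
def SameChord (s t : ℝ × ℝ) : Prop :=
  (SamePoint s.1 t.1 ∧ SamePoint s.2 t.2) ∨ (SamePoint s.1 t.2 ∧ SamePoint s.2 t.1)

/-- `p` lies in the deep umbra of the shortcut from `u` to `u + β`
(where `0 < β ≤ π` is the counterclockwise arc spanned by the shortcut):
`p` lies in the inner umbra, and `|p u'| + |s| ≥ d(p, v')` where `u'` is the
endpoint closer to `p` and `v'` the other one. -/
def InDeepUmbra (u β p : ℝ) : Prop :=
  (∃ t : ℝ, sdelta (chordLen u (u + β)) ≤ t ∧ t ≤ β - sdelta (chordLen u (u + β)) ∧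
    arcDist p (u + t) = 0) ∧
  (arcDist p u ≤ arcDist p (u + β) →
    arcDist p (u + β) ≤ chordLen p u + chordLen u (u + β)) ∧
  (arcDist p (u + β) ≤ arcDist p u →
    arcDist p u ≤ chordLen p (u + β) + chordLen u (u + β))

/-- `d` equals δ*_k : for `k ∈ {3,4,5}` this is `δ(a*_k)` where `a*_k + δ(a*_k) = (k-1)π/k`,
and for `k = 6` it is `δ(2) = π/2 - 1`. -/
def dstarSpec (k : ℕ) (d : ℝ) : Prop :=
  (k = 6 ∧ d = sdelta 2) ∨
    (∃ a, a ∈ Set.Icc (0 : ℝ) 2 ∧ a + sdelta a = ((k : ℝ) - 1) * π / k ∧ d = sdelta a)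


/-! A walk all of whose chords span arcs of length at most `A` covers at most
`A / (2 sin (A / 2))` times its cost in arc distance. So a walk of cost below `2 + 2δ`
between points at arc distance `x ≥ π - √δ` must use a chord of length `2 - O(δ)`; the rest of
the walk costs `O(δ)`, hence that chord has an endpoint `O(δ)`-close to the start and spans an
arc within `O(δ)` of `x`. Over a grid of `≈ 1/(4δ)` start points and `≈ 1/(11√δ)` lengths,
spaced `11δ` apart, each chord serves at most two grid pairs, one per endpoint; with `δ = 1/m`
this forces `≳ m^{3/2}/88` chords. -/

theorem arcDist_eq_dist (p q : ℝ) :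
    arcDist p q = dist (p : AddCircle (2 * π)) (q : AddCircle (2 * π)) := by
  rw [dist_eq_norm, ← AddCircle.coe_sub]
  refine le_antisymm ?_ (le_ciInf fun n => ?_)
  · rw [AddCircle.norm_eq]
    refine (ciInf_le ⟨0, ?_⟩ (-round ((2 * π)⁻¹ * (p - q)))).trans_eq ?_
    · rintro _ ⟨n, rfl⟩
      exact abs_nonneg _
    · push_cast
      ring_nf
  · have : ((p - q + 2 * π * n : ℝ) : AddCircle (2 * π)) = ((p - q : ℝ) : AddCircle (2 * π)) := by
      rw [AddCircle.coe_add, show 2 * π * n = n • (2 * π) by rw [zsmul_eq_mul]; ring,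
        AddCircle.coe_zsmul, AddCircle.coe_period, smul_zero, add_zero]
    rw [← this]
    exact QuotientAddGroup.norm_mk_le_norm

theorem arcDist_nonneg (p q : ℝ) : 0 ≤ arcDist p q := by
  rw [arcDist_eq_dist]
  exact dist_nonneg

theorem arcDist_le_pi (p q : ℝ) : arcDist p q ≤ π := by
  rw [arcDist_eq_dist, dist_eq_norm]
  refine (AddCircle.norm_le_half_period _ (by positivity)).trans_eq ?_
  rw [abs_of_pos (by positivity)]
  ring

theorem arcDist_comm (p q : ℝ) : arcDist p q = arcDist q p := by
  simp only [arcDist_eq_dist, dist_comm]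

theorem arcDist_triangle (p q r : ℝ) : arcDist p r ≤ arcDist p q + arcDist q r := by
  simp only [arcDist_eq_dist]
  exact dist_triangle _ _ _

theorem arcDist_eq_abs {p q : ℝ} (h : |p - q| ≤ π) : arcDist p q = |p - q| := by
  rw [arcDist_eq_dist, dist_eq_norm, ← AddCircle.coe_sub]
  refine (AddCircle.norm_coe_eq_abs_iff (p := 2 * π) two_pi_pos.ne').2 ?_
  rwa [abs_of_pos two_pi_pos, mul_div_cancel_left₀ _ two_ne_zero]

theorem arcDist_add_self {p x : ℝ} (hx : 0 ≤ x) (hxπ : x ≤ π) : arcDist p (p + x) = x := by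
  have h : |p - (p + x)| = x := by rw [sub_add_cancel_left, abs_neg, abs_of_nonneg hx]
  rw [arcDist_eq_abs (h.trans_le hxπ), h]

theorem mul_sin_le_mul_sin {a b : ℝ} (ha : 0 ≤ a) (hab : a ≤ b) (hb : b ≤ π) :
    a * sin b ≤ b * sin a := by
  rcases (ha.trans hab).eq_or_lt with rfl | hb0
  · rw [le_antisymm hab ha]
  have hab' : a / b ≤ 1 := (div_le_one hb0).2 hab
  have key := strictConcaveOn_sin_Icc.concaveOn.2 (⟨hb0.le, hb⟩ : b ∈ Set.Icc 0 π)
    (⟨le_rfl, pi_pos.le⟩ : (0 : ℝ) ∈ Set.Icc 0 π) (div_nonneg ha hb0.le) (sub_nonneg.2 hab')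
    (by ring)
  simp only [smul_eq_mul, sin_zero, mul_zero, add_zero, div_mul_cancel₀ a hb0.ne'] at key
  calc a * sin b = b * (a / b * sin b) := by field_simp
    _ ≤ b * sin a := mul_le_mul_of_nonneg_left key hb0.le

theorem chordLen_nonneg (u v : ℝ) : 0 ≤ chordLen u v :=
  mul_nonneg zero_le_two <| sin_nonneg_of_nonneg_of_le_pi (by linarith [arcDist_nonneg u v])
    (by linarith [arcDist_le_pi u v, pi_pos])

theorem arcDist_le_pi_div_two_mul_chordLen (u v : ℝ) : arcDist u v ≤ π / 2 * chordLen u v := by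
  have h := mul_le_sin (by linarith [arcDist_nonneg u v] : 0 ≤ arcDist u v / 2)
    (by linarith [arcDist_le_pi u v])
  have h' := mul_le_mul_of_nonneg_left h pi_pos.le
  rw [show π * (2 / π * (arcDist u v / 2)) = arcDist u v by field_simp] at h'
  unfold chordLen
  linarith

theorem arcDist_sub_chordLen_le (u v : ℝ) : arcDist u v - chordLen u v ≤ chordLen u v ^ 3 / 6 := by
  have ha := arcDist_nonneg u v
  have hsin := sin_ge_sub_cube (by linarith : 0 ≤ arcDist u v / 2)
  have hcube := pow_le_pow_left₀ ha (arcDist_le_pi_div_two_mul_chordLen u v) 3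
  have hπ : π ^ 3 ≤ 32 := (pow_le_pow_left₀ pi_pos.le pi_lt_d2.le 3).trans (by norm_num)
  have hc : 0 ≤ chordLen u v ^ 3 := pow_nonneg (chordLen_nonneg u v) 3
  unfold chordLen at *
  nlinarith

theorem two_sub_sq_le_two_mul_sin_half (a : ℝ) : 2 - (π - a) ^ 2 / 4 ≤ 2 * sin (a / 2) := by
  have h := one_sub_sq_div_two_le_cos (x := π / 2 - a / 2)
  rw [cos_pi_div_two_sub] at h
  nlinarith

theorem walkCost_nonneg (q p : ℝ) (L : List (ℝ × ℝ)) : 0 ≤ walkCost q p L := by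
  induction L generalizing p with
  | nil => exact arcDist_nonneg p q
  | cons e L ih =>
    have := arcDist_nonneg p e.1
    have := chordLen_nonneg e.1 e.2
    have := ih e.2
    simp only [walkCost]
    linarith

theorem walkCost_append_cons (q p : ℝ) (L₁ L₂ : List (ℝ × ℝ)) (e : ℝ × ℝ) :
    walkCost q p (L₁ ++ e :: L₂) = walkCost e.1 p L₁ + chordLen e.1 e.2 + walkCost q e.2 L₂ := by
  induction L₁ generalizing p with
  | nil => simp [walkCost]
  | cons f L₁ ih =>
    simp only [List.cons_append, walkCost, ih]
    ring

theorem arcDist_mul_chord_le_walkCost_mul {q p A : ℝ} {L : List (ℝ × ℝ)} (hA0 : 0 ≤ A)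
    (hAπ : A ≤ π) (hL : ∀ e ∈ L, arcDist e.1 e.2 ≤ A) :
    arcDist p q * (2 * sin (A / 2)) ≤ walkCost q p L * A := by
  have hchord : 2 * sin (A / 2) ≤ A := by linarith [sin_le (by linarith : 0 ≤ A / 2)]
  have hsin : 0 ≤ 2 * sin (A / 2) :=
    mul_nonneg zero_le_two (sin_nonneg_of_nonneg_of_le_pi (by linarith) (by linarith))
  induction L generalizing p with
  | nil => exact mul_le_mul_of_nonneg_left hchord (arcDist_nonneg p q)
  | cons e L ih =>
    have he : arcDist e.1 e.2 * (2 * sin (A / 2)) ≤ chordLen e.1 e.2 * A := by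
      have := mul_sin_le_mul_sin (by linarith [arcDist_nonneg e.1 e.2])
        (by linarith [hL e List.mem_cons_self] : arcDist e.1 e.2 / 2 ≤ A / 2) (by linarith)
      unfold chordLen
      linarith
    have hp := mul_le_mul_of_nonneg_left hchord (arcDist_nonneg p e.1)
    have hq := ih (p := e.2) fun f hf => hL f (List.mem_cons_of_mem e hf)
    have htri : arcDist p q ≤ arcDist p e.1 + arcDist e.1 e.2 + arcDist e.2 q := by
      linarith [arcDist_triangle p e.1 q, arcDist_triangle e.1 e.2 q]
    have htri' := mul_le_mul_of_nonneg_right htri hsin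
    simp only [walkCost]
    nlinarith

theorem arcDist_le_walkCost_add_cube (q p : ℝ) (L : List (ℝ × ℝ)) :
    arcDist p q ≤ walkCost q p L + walkCost q p L ^ 3 / 6 := by
  induction L generalizing p with
  | nil => simp only [walkCost]; linarith [pow_nonneg (arcDist_nonneg p q) 3]
  | cons e L ih =>
    have hp := arcDist_nonneg p e.1
    have hc := chordLen_nonneg e.1 e.2
    have hW := walkCost_nonneg q e.2 L
    have he := arcDist_sub_chordLen_le e.1 e.2
    have hq := ih e.2
    have htri : arcDist p q ≤ arcDist p e.1 + arcDist e.1 e.2 + arcDist e.2 q := by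
      linarith [arcDist_triangle p e.1 q, arcDist_triangle e.1 e.2 q]
    have hcube : chordLen e.1 e.2 ^ 3 + walkCost q e.2 L ^ 3 ≤
        (arcDist p e.1 + chordLen e.1 e.2 + walkCost q e.2 L) ^ 3 := by
      exact (pow_add_pow_le hc hW three_ne_zero).trans
        (pow_le_pow_left₀ (add_nonneg hc hW) (by linarith) 3)
    simp only [walkCost]
    linarith

theorem bddBelow_walkCost (S : Finset (ℝ × ℝ)) (p q : ℝ) :
    BddBelow {c | ∃ L : List (ℝ × ℝ), (∀ e ∈ L, e ∈ S ∨ (e.2, e.1) ∈ S) ∧ c = walkCost q p L} :=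
  ⟨0, by rintro c ⟨L, -, rfl⟩; exact walkCost_nonneg q p L⟩

theorem exists_walkCost_lt_of_dS_lt {S : Finset (ℝ × ℝ)} {p q B : ℝ} (h : dS S p q < B) :
    ∃ L : List (ℝ × ℝ), (∀ e ∈ L, e ∈ S ∨ (e.2, e.1) ∈ S) ∧ walkCost q p L < B := by
  obtain ⟨c, ⟨L, hL, rfl⟩, hc⟩ :=
    (csInf_lt_iff (bddBelow_walkCost S p q) ⟨walkCost q p [], [], by simp, rfl⟩).1 h
  exact ⟨L, hL, hc⟩

theorem dS_le_pi (S : Finset (ℝ × ℝ)) (p q : ℝ) : dS S p q ≤ π :=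
  (csInf_le (bddBelow_walkCost S p q) ⟨[], by simp, rfl⟩).trans (arcDist_le_pi p q)

theorem dS_le_diamS (S : Finset (ℝ × ℝ)) (p q : ℝ) : dS S p q ≤ diamS S :=
  le_csSup ⟨π, by rintro d ⟨p', q', rfl⟩; exact dS_le_pi S p' q'⟩ ⟨p, q, rfl⟩

theorem arcDist_le_of_walkCost_le_chordLen_add {q p η : ℝ} {L : List (ℝ × ℝ)} {e : ℝ × ℝ}
    (he : e ∈ L) (hW : walkCost q p L ≤ chordLen e.1 e.2 + η) :
    arcDist p e.1 ≤ η + η ^ 3 / 6 ∧ |arcDist e.1 e.2 - arcDist p q| ≤ η + η ^ 3 / 6 := by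
  obtain ⟨L₁, L₂, rfl⟩ := List.append_of_mem he
  rw [walkCost_append_cons] at hW
  set W₁ := walkCost e.1 p L₁
  set W₂ := walkCost q e.2 L₂
  have hW₁ : 0 ≤ W₁ := walkCost_nonneg _ _ _
  have hW₂ : 0 ≤ W₂ := walkCost_nonneg _ _ _
  have hη : W₁ + W₂ ≤ η := by linarith
  have hcube : W₁ ^ 3 + W₂ ^ 3 ≤ η ^ 3 :=
    (pow_add_pow_le hW₁ hW₂ three_ne_zero).trans (pow_le_pow_left₀ (add_nonneg hW₁ hW₂) hη 3)
  have h₁ := arcDist_le_walkCost_add_cube e.1 p L₁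
  have h₂ := arcDist_le_walkCost_add_cube q e.2 L₂
  have hW₂3 := pow_nonneg hW₂ 3
  refine ⟨by linarith, abs_le.2 ⟨?_, ?_⟩⟩
  · linarith [arcDist_triangle p e.1 q, arcDist_triangle e.1 e.2 q]
  · linarith [arcDist_triangle e.1 p e.2, arcDist_triangle p q e.2, arcDist_comm e.1 p,
      arcDist_comm e.2 q]

-- Chords spanning arcs below `π - 3s` stretch too little to cover `π - s` at cost `2 + 2s²`.
theorem two_add_two_mul_sq_mul_lt {s x : ℝ} (hs0 : 0 < s) (hs : s ≤ 1 / 10 ^ 4)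
    (hx : π - s ≤ x) : (2 + 2 * s ^ 2) * (π - 3 * s) < x * (2 * sin ((π - 3 * s) / 2)) := by
  have hsin := two_sub_sq_le_two_mul_sin_half (π - 3 * s)
  rw [sub_sub_cancel] at hsin
  have hsin0 : 0 ≤ 2 - (3 * s) ^ 2 / 4 := by nlinarith
  have hπ := pi_gt_d2
  calc (2 + 2 * s ^ 2) * (π - 3 * s) < (π - s) * (2 - (3 * s) ^ 2 / 4) := by nlinarith [pi_lt_d2]
    _ ≤ x * (2 * sin ((π - 3 * s) / 2)) := mul_le_mul hx hsin hsin0 (by linarith)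

def Serves (ε p x : ℝ) (e : ℝ × ℝ) : Prop :=
  (arcDist p e.1 ≤ ε ∨ arcDist p e.2 ≤ ε) ∧ |arcDist e.1 e.2 - x| ≤ ε

theorem exists_mem_serves_of_diamS_le {S : Finset (ℝ × ℝ)} {s : ℝ} (hs0 : 0 < s)
    (hs : s ≤ 1 / 10 ^ 4) (hdiam : diamS S ≤ 2 + s ^ 2) (p : ℝ) {x : ℝ} (hx : π - s ≤ x)
    (hxπ : x ≤ π) : ∃ e ∈ S, Serves (5 * s ^ 2) p x e := by
  have harc : arcDist p (p + x) = x := arcDist_add_self (by linarith [pi_gt_d2]) hxπ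
  obtain ⟨L, hLS, hW⟩ : ∃ L : List (ℝ × ℝ), (∀ e ∈ L, e ∈ S ∨ (e.2, e.1) ∈ S) ∧
      walkCost (p + x) p L < 2 + 2 * s ^ 2 :=
    exists_walkCost_lt_of_dS_lt <| (dS_le_diamS S p (p + x)).trans_lt <| by nlinarith
  obtain ⟨e, he, hlong⟩ : ∃ e ∈ L, π - 3 * s ≤ arcDist e.1 e.2 := by
    by_contra! hshort
    have := arcDist_mul_chord_le_walkCost_mul (p := p) (q := p + x) (by linarith [pi_gt_d2])
      (by linarith) fun e he => (hshort e he).le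
    rw [harc] at this
    nlinarith [two_add_two_mul_sq_mul_lt hs0 hs hx, walkCost_nonneg (p + x) p L, pi_gt_d2]
  have hchord : 2 - 9 * s ^ 2 / 4 ≤ chordLen e.1 e.2 := by
    have := two_sub_sq_le_two_mul_sin_half (arcDist e.1 e.2)
    have : (π - arcDist e.1 e.2) ^ 2 ≤ (3 * s) ^ 2 :=
      pow_le_pow_left₀ (by linarith [arcDist_le_pi e.1 e.2]) (by linarith) 2
    unfold chordLen
    linarith
  obtain ⟨hnear, hspan⟩ := arcDist_le_of_walkCost_le_chordLen_add (q := p + x) (p := p)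
    (η := 17 * s ^ 2 / 4) he (by linarith)
  have hη : 17 * s ^ 2 / 4 + (17 * s ^ 2 / 4) ^ 3 / 6 ≤ 5 * s ^ 2 := by
    have hs2 : s ^ 2 ≤ 1 / 10 ^ 8 := by nlinarith
    have hs4 : (s ^ 2) ^ 2 ≤ 1 / 10 ^ 16 := by nlinarith
    nlinarith [mul_le_mul_of_nonneg_left hs4 (sq_nonneg s)]
  rw [harc] at hspan
  rcases hLS e he with heS | heS
  · exact ⟨e, heS, Or.inl (hnear.trans hη), hspan.trans hη⟩
  · exact ⟨(e.2, e.1), heS, Or.inr (hnear.trans hη), by rw [arcDist_comm]; exact hspan.trans hη⟩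

theorem card_mul_card_le_two_mul_card {ι κ : Type*} {S : Finset (ℝ × ℝ)} {I : Finset ι}
    {J : Finset κ} {P : ι → ℝ} {X : κ → ℝ} {ε : ℝ}
    (hP : ∀ i ∈ I, ∀ i' ∈ I, arcDist (P i) (P i') ≤ 2 * ε → i = i')
    (hX : ∀ j ∈ J, ∀ j' ∈ J, |X j - X j'| ≤ 2 * ε → j = j')
    (hS : ∀ i ∈ I, ∀ j ∈ J, ∃ e ∈ S, Serves ε (P i) (X j) e) :
    I.card * J.card ≤ 2 * S.card := by
  classical
  choose! F hFS hF using hS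
  -- Each chord serves at most one grid point through each of its two endpoints.
  let tag : ι × κ → (ℝ × ℝ) × Bool := fun v =>
    (F v.1 v.2, decide (arcDist (P v.1) (F v.1 v.2).1 ≤ ε))
  have hnear : ∀ {i i' : ι} {w : ℝ}, arcDist (P i) w ≤ ε → arcDist (P i') w ≤ ε →
      arcDist (P i) (P i') ≤ 2 * ε := fun {i i' w} h h' => by
    linarith [arcDist_triangle (P i) w (P i'), arcDist_comm (P i') w]
  have hcard : (S ×ˢ (Finset.univ : Finset Bool)).card = 2 * S.card := by
    simp [mul_comm]
  rw [← Finset.card_product, ← hcard]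
  refine Finset.card_le_card_of_injOn tag (fun v hv => ?_) fun v hv v' hv' hvv' => ?_
  · rw [Finset.coe_product, Set.mem_prod] at hv
    exact Finset.mem_product.2 ⟨hFS _ hv.1 _ hv.2, Finset.mem_univ _⟩
  · rw [Finset.coe_product, Set.mem_prod] at hv hv'
    obtain ⟨he, htag⟩ := Prod.ext_iff.1 hvv'
    obtain ⟨hend, hlen⟩ := hF _ hv.1 _ hv.2
    obtain ⟨hend', hlen'⟩ := hF _ hv'.1 _ hv'.2
    simp only [tag] at he htag
    rw [← he] at hend' hlen' htag
    refine Prod.ext (hP _ hv.1 _ hv'.1 ?_) (hX _ hv.2 _ hv'.2 ?_)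
    · by_cases h : arcDist (P v.1) (F v.1 v.2).1 ≤ ε
      · exact hnear h (by simpa [h] using htag)
      · exact hnear (hend.resolve_left h) (hend'.resolve_left (by simpa [h] using htag))
    · rw [abs_le] at hlen hlen' ⊢
      constructor <;> linarith

theorem eq_of_abs_natCast_mul_sub_lt {i i' : ℕ} {c : ℝ} (hc : 0 < c)
    (h : |(i : ℝ) * c - i' * c| < c) : i = i' := by
  rw [abs_lt] at h
  by_contra hne
  rcases Nat.lt_or_gt_of_ne hne with hlt | hlt
  · have : (i : ℝ) + 1 ≤ i' := by exact_mod_cast hlt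
    nlinarith
  · have : (i' : ℝ) + 1 ≤ i := by exact_mod_cast hlt
    nlinarith

theorem floor_mul_floor_le_two_mul_card {S : Finset (ℝ × ℝ)} {m : ℕ} (hm : 10 ^ 8 ≤ m)
    (hdiam : diamS S ≤ 2 + 1 / (m : ℝ)) : ⌊√(m : ℝ) / 11⌋₊ * ⌊(m : ℝ) / 4⌋₊ ≤ 2 * S.card := by
  have hm' : (10 : ℝ) ^ 8 ≤ m := by exact_mod_cast hm
  have hr : (10 : ℝ) ^ 4 ≤ √(m : ℝ) := Real.le_sqrt_of_sq_le (by linarith)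
  set s := (√(m : ℝ))⁻¹
  have hs0 : 0 < s := by positivity
  have hs : s ≤ 1 / 10 ^ 4 := by rw [one_div]; exact inv_anti₀ (by positivity) hr
  have hs2 : s ^ 2 = 1 / m := by rw [inv_pow, Real.sq_sqrt (by positivity), one_div]
  have hstep : 0 < 11 * s ^ 2 := by positivity
  have hlen : ∀ j < ⌊√(m : ℝ) / 11⌋₊, (j : ℝ) * (11 * s ^ 2) ≤ s := fun j hj => by
    have : (j : ℝ) ≤ √(m : ℝ) / 11 := (Nat.cast_le.2 hj.le).trans (Nat.floor_le (by positivity))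
    calc (j : ℝ) * (11 * s ^ 2) ≤ √(m : ℝ) / 11 * (11 * s ^ 2) := by gcongr
      _ = (√(m : ℝ) * s) * s := by ring
      _ = s := by rw [mul_inv_cancel₀ (by positivity), one_mul]
  have hpos : ∀ i < ⌊(m : ℝ) / 4⌋₊, (i : ℝ) * (11 * s ^ 2) ≤ 11 / 4 := fun i hi => by
    have : (i : ℝ) ≤ m / 4 := (Nat.cast_le.2 hi.le).trans (Nat.floor_le (by positivity))
    calc (i : ℝ) * (11 * s ^ 2) ≤ m / 4 * (11 * s ^ 2) := by gcongr
      _ = 11 / 4 := by rw [hs2]; field_simp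
  rw [mul_comm, ← Finset.card_range ⌊(m : ℝ) / 4⌋₊, ← Finset.card_range ⌊√(m : ℝ) / 11⌋₊]
  refine card_mul_card_le_two_mul_card (ε := 5 * s ^ 2) (P := fun i : ℕ => i * (11 * s ^ 2))
    (X := fun j : ℕ => π - j * (11 * s ^ 2)) (fun i hi i' hi' h => ?_) (fun j _ j' _ h => ?_)
    fun i _ j hj => exists_mem_serves_of_diamS_le hs0 hs (hs2 ▸ hdiam) _ ?_ ?_
  · have hi := hpos i (Finset.mem_range.1 hi)
    have hi' := hpos i' (Finset.mem_range.1 hi')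
    have h0 := mul_nonneg (Nat.cast_nonneg i) hstep.le
    have h0' := mul_nonneg (Nat.cast_nonneg i') hstep.le
    rw [arcDist_eq_abs (abs_le.2 ⟨by linarith [pi_gt_three], by linarith [pi_gt_three]⟩)] at h
    exact eq_of_abs_natCast_mul_sub_lt hstep (by linarith)
  · rw [sub_sub_sub_cancel_left, abs_sub_comm] at h
    exact eq_of_abs_natCast_mul_sub_lt hstep (by linarith)
  · linarith [hlen j (Finset.mem_range.1 hj)]
  · linarith [mul_nonneg (Nat.cast_nonneg j) hstep.le]

/-- `Ω(m^{3/2})` shortcuts are necessary for diameter `2 + 1/m`. -/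
theorem stmt6 :
    ∃ c : ℝ, 0 < c ∧ ∃ m₀ : ℕ, ∀ m : ℕ, m₀ ≤ m →
      ∀ S : Finset (ℝ × ℝ), (∀ s ∈ S, IsShortcut s) →
        diamS S ≤ 2 + 1 / (m : ℝ) →
        c * (m : ℝ) ^ ((3 : ℝ) / 2) ≤ (S.card : ℝ) := by
  refine ⟨1 / 100, by norm_num, 10 ^ 8, fun m hm S _ hdiam => ?_⟩
  have hcount : (⌊√(m : ℝ) / 11⌋₊ * ⌊(m : ℝ) / 4⌋₊ : ℝ) ≤ 2 * S.card := by
    exact_mod_cast floor_mul_floor_le_two_mul_card hm hdiam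
  set r := √(m : ℝ)
  have hm' : (10 : ℝ) ^ 8 ≤ m := by exact_mod_cast hm
  have hr : (10 : ℝ) ^ 4 ≤ r := Real.le_sqrt_of_sq_le (by linarith)
  have hr2 : r ^ 2 = m := Real.sq_sqrt (Nat.cast_nonneg m)
  have hpow : (m : ℝ) ^ ((3 : ℝ) / 2) = r ^ 3 := by
    rw [← hr2, ← Real.rpow_natCast, ← Real.rpow_mul (by positivity)]
    norm_num
  have h₁ : r / 11 - 1 ≤ ⌊r / 11⌋₊ := by linarith [Nat.lt_floor_add_one (r / 11)]
  have h₂ : r ^ 2 / 4 - 1 ≤ ⌊(m : ℝ) / 4⌋₊ := by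
    rw [← hr2]; linarith [Nat.lt_floor_add_one (r ^ 2 / 4)]
  rw [hpow]
  nlinarith [mul_le_mul h₁ h₂ (by nlinarith) (Nat.cast_nonneg _)]
end

section
/- Lengths of shortcuts used by an antipodal pair: let k ∈ {4,5,6} and let a₁ ≥ a₂ ≥ … ≥ a_n be real numbers in (0,2] with a₁ + ⋯ + a_n ≤ π − δ*_k and δ(a₁) + ⋯ + δ(a_n) ≥ δ*_k/2. Then a₁ ≥ λ_k and a₂ + ⋯ + a_n ≤ σ_k. (In particular, if the shortest path between an antipodal pair of points of C uses the set S' of shortcuts and has length at most π − δ*_k, then the longest shortcut of S' has length at least λ_k and the remaining ones have total length at most σ_k.) -/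
open Real MeasureTheory

/-!
Write `δ = sdelta`, a strictly convex function on `[0, 2]` with `δ(0) = 0`, hence superadditive and
with `δ(x)/x` increasing. Suppose the largest length `a₁` were below `λ`. If `a₁ ≤ σ`, then
`δ(aᵢ) ≤ aᵢ δ(σ)/σ` for all `i`, so `∑ δ(aᵢ) ≤ (σ + λ) δ(σ)/σ < δ(σ) + δ(λ)`. If `σ < a₁ < λ`, the
remaining lengths sum to at most `σ + λ - a₁`, so by superadditivity and monotonicity
`∑ δ(aᵢ) ≤ δ(a₁) + δ(σ + λ - a₁) < δ(σ) + δ(λ)`, the pair `(σ, λ)` being more spread out than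
`(a₁, σ + λ - a₁)`. Either way `∑ δ(aᵢ) < δ*/2`. Hence `a₁ ≥ λ`, and the others sum to at most
`π - δ* - λ = σ`.
-/

open Finset

section ConvexOnIcc

variable {f : ℝ → ℝ} {b : ℝ}

theorem ConvexOn.mul_map_le_of_map_zero (hf : ConvexOn ℝ (Set.Icc 0 b) f) (hf0 : f 0 = 0)
    {s t : ℝ} (hs : 0 ≤ s) (hst : s ≤ t) (ht : t ≤ b) : t * f s ≤ s * f t := by
  rcases hs.eq_or_lt with rfl | hs
  · simp [hf0]
  rcases hst.eq_or_lt with rfl | hst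
  · rfl
  simpa [hf0] using hf.secant_mono_aux1 ⟨le_rfl, by linarith⟩ ⟨by linarith, ht⟩ hs hst

theorem StrictConvexOn.mul_map_lt_of_map_zero (hf : StrictConvexOn ℝ (Set.Icc 0 b) f)
    (hf0 : f 0 = 0) {s t : ℝ} (hs : 0 < s) (hst : s < t) (ht : t ≤ b) : t * f s < s * f t := by
  simpa [hf0] using hf.secant_strict_mono_aux1 ⟨le_rfl, by linarith⟩ ⟨by linarith, ht⟩ hs hst

theorem ConvexOn.monotoneOn_of_map_zero (hf : ConvexOn ℝ (Set.Icc 0 b) f) (hf0 : f 0 = 0)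
    (hnonneg : ∀ x ∈ Set.Icc 0 b, 0 ≤ f x) : MonotoneOn f (Set.Icc 0 b) := by
  intro s hs t ht hst
  rcases ht.1.eq_or_lt with rfl | ht0
  · rw [le_antisymm hst hs.1]
  have := hf.mul_map_le_of_map_zero hf0 hs.1 hst ht.2
  nlinarith [hnonneg t ht]

theorem ConvexOn.sum_map_le_map_sum_of_map_zero (hf : ConvexOn ℝ (Set.Icc 0 b) f)
    (hf0 : f 0 = 0) {ι : Type*} (T : Finset ι) (x : ι → ℝ) (hx : ∀ i ∈ T, 0 ≤ x i)
    (hsum : ∑ i ∈ T, x i ≤ b) : ∑ i ∈ T, f (x i) ≤ f (∑ i ∈ T, x i) := by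
  rcases (sum_nonneg hx).eq_or_lt with hB | hB
  · have hzero := (sum_eq_zero_iff_of_nonneg hx).1 hB.symm
    rw [← hB, hf0]
    exact (sum_eq_zero fun i hi ↦ by rw [hzero i hi, hf0]).le
  have hterm : ∀ i ∈ T, (∑ j ∈ T, x j) * f (x i) ≤ x i * f (∑ j ∈ T, x j) := fun i hi ↦
    hf.mul_map_le_of_map_zero hf0 (hx i hi) (single_le_sum hx hi) hsum
  have := sum_le_sum hterm
  rw [← mul_sum, ← sum_mul] at this
  exact le_of_mul_le_mul_left this hB

theorem StrictConvexOn.map_add_map_lt {s : Set ℝ} (hf : StrictConvexOn ℝ s f) {σ l x : ℝ}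
    (hσ : σ ∈ s) (hl : l ∈ s) (hσx : σ < x) (hxl : x < l) :
    f x + f (σ + l - x) < f σ + f l := by
  have h₁ := hf.secant_strict_mono_aux1 hσ hl hσx hxl
  have h₂ := hf.secant_strict_mono_aux1 hσ hl (y := σ + l - x) (by linarith) (by linarith)
  nlinarith

variable (hf : StrictConvexOn ℝ (Set.Icc 0 b) f) (hf0 : f 0 = 0)
  (hmono : MonotoneOn f (Set.Icc 0 b))
include hf hf0 hmono

theorem StrictConvexOn.sum_map_lt_of_forall_le_left {σ l : ℝ} (hσ : 0 < σ) (hσl : σ < l)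
    (hl : l ≤ b) {ι : Type*} (T : Finset ι) (x : ι → ℝ) (hx : ∀ i ∈ T, x i ∈ Set.Ioc 0 σ)
    (hsum : ∑ i ∈ T, x i ≤ σ + l) : ∑ i ∈ T, f (x i) < f σ + f l := by
  have hfσ : 0 ≤ f σ := hf0 ▸ hmono ⟨le_rfl, by linarith⟩ ⟨hσ.le, by linarith⟩ hσ.le
  have hterm : ∀ i ∈ T, σ * f (x i) ≤ x i * f σ := fun i hi ↦
    hf.convexOn.mul_map_le_of_map_zero hf0 (hx i hi).1.le (hx i hi).2 (by linarith)
  have hslope := hf.mul_map_lt_of_map_zero hf0 hσ hσl hl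
  have := sum_le_sum hterm
  rw [← mul_sum, ← sum_mul] at this
  nlinarith [mul_le_mul_of_nonneg_right hsum hfσ]

theorem StrictConvexOn.sum_map_lt_of_max_lt {σ l : ℝ} (hσ : 0 < σ) (hσl : σ < l) (hl : l ≤ b)
    {ι : Type*} [DecidableEq ι] (T : Finset ι) (x : ι → ℝ) {i₀ : ι} (hi₀ : i₀ ∈ T)
    (hx : ∀ i ∈ T, x i ∈ Set.Ioc 0 (x i₀)) (hmax : x i₀ < l) (hsum : ∑ i ∈ T, x i ≤ σ + l) :
    ∑ i ∈ T, f (x i) < f σ + f l := by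
  rcases le_or_gt (x i₀) σ with hle | hgt
  · exact hf.sum_map_lt_of_forall_le_left hf0 hmono hσ hσl hl T x
      (fun i hi ↦ ⟨(hx i hi).1, (hx i hi).2.trans hle⟩) hsum
  have hsplit := add_sum_erase T x hi₀
  have hxi₀ := hx i₀ hi₀
  have hrest : ∑ i ∈ T.erase i₀, f (x i) ≤ f (∑ i ∈ T.erase i₀, x i) :=
    hf.convexOn.sum_map_le_map_sum_of_map_zero hf0 _ x
      (fun i hi ↦ (hx i (mem_of_mem_erase hi)).1.le) (by linarith)
  have hrest' : f (∑ i ∈ T.erase i₀, x i) ≤ f (σ + l - x i₀) :=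
    hmono ⟨sum_nonneg fun i hi ↦ (hx i (mem_of_mem_erase hi)).1.le, by linarith⟩
      ⟨by linarith, by linarith⟩ (by linarith)
  have hspread := hf.map_add_map_lt ⟨hσ.le, by linarith⟩ ⟨by linarith, hl⟩ hgt hmax
  rw [← add_sum_erase T (fun i ↦ f (x i)) hi₀]
  linarith

end ConvexOnIcc

theorem strictConvexOn_arcsin : StrictConvexOn ℝ (Set.Icc 0 1) arcsin := by
  refine StrictMonoOn.strictConvexOn_of_deriv (convex_Icc 0 1) continuous_arcsin.continuousOn ?_
  rw [interior_Icc, deriv_arcsin]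
  intro x hx y hy hxy
  have hy2 : 0 < 1 - y ^ 2 := by nlinarith [hy.1, hy.2]
  exact one_div_lt_one_div_of_lt (sqrt_pos.2 hy2) (sqrt_lt_sqrt hy2.le (by nlinarith [hx.1]))

theorem strictConvexOn_sdelta : StrictConvexOn ℝ (Set.Icc 0 2) sdelta := by
  refine ⟨convex_Icc 0 2, fun x hx y hy hxy p q hp hq hpq ↦ ?_⟩
  have h := strictConvexOn_arcsin.2 (x := x / 2) (y := y / 2) ⟨by linarith [hx.1], by linarith [hx.2]⟩
    ⟨by linarith [hy.1], by linarith [hy.2]⟩ (fun h ↦ hxy (by linarith)) hp hq hpq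
  simp only [smul_eq_mul, sdelta] at h ⊢
  rw [show (p * x + q * y) / 2 = p * (x / 2) + q * (y / 2) by ring]
  linarith

theorem sdelta_zero : sdelta 0 = 0 := by simp [sdelta]

theorem sdelta_nonneg {x : ℝ} (hx : x ∈ Set.Icc (0 : ℝ) 2) : 0 ≤ sdelta x := by
  have h := sin_le (arcsin_nonneg.2 (by linarith [hx.1] : (0 : ℝ) ≤ x / 2))
  rw [sin_arcsin (by linarith [hx.1]) (by linarith [hx.2])] at h
  simp only [sdelta]
  linarith

theorem monotoneOn_sdelta : MonotoneOn sdelta (Set.Icc 0 2) :=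
  strictConvexOn_sdelta.convexOn.monotoneOn_of_map_zero sdelta_zero fun _ ↦ sdelta_nonneg

theorem sdelta_two : sdelta 2 = π / 2 - 1 := by norm_num [sdelta, arcsin_one]

theorem dstarSpec.le_sdelta_two {k : ℕ} {d : ℝ} (hd : dstarSpec k d) : d ≤ sdelta 2 := by
  rcases hd with ⟨_, rfl⟩ | ⟨a, ha, _, rfl⟩
  · rfl
  · exact monotoneOn_sdelta ha ⟨zero_le_two, le_rfl⟩ ha.2

theorem stmt18_general (k : ℕ) (dstar sig lam : ℝ)
    (hd : dstarSpec k dstar)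
    (hsig : sig ∈ Set.Icc (π - dstar - 2) 2)
    (hlam : lam ∈ Set.Icc (π - dstar - 2) 2)
    (hsl : sig < lam) (hsum : sig + lam = π - dstar)
    (hgs : sdelta sig + sdelta (π - dstar - sig) = dstar / 2)
    (n : ℕ) (hn : 0 < n) (a : Fin n → ℝ) (hmono : Antitone a)
    (hrange : ∀ i, a i ∈ Set.Ioc (0 : ℝ) 2)
    (htotal : ∑ i, a i ≤ π - dstar)
    (hdelta : dstar / 2 ≤ ∑ i, sdelta (a i)) :
    lam ≤ a ⟨0, hn⟩ ∧ ∑ i ∈ Finset.univ.erase ⟨0, hn⟩, a i ≤ sig := by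
  have hsig0 : 0 < sig := by
    have := hd.le_sdelta_two
    rw [sdelta_two] at this
    linarith [hsig.1, pi_gt_three]
  rw [← hsum, add_sub_cancel_left] at hgs
  have hlead : lam ≤ a ⟨0, hn⟩ := by
    by_contra! hlt
    have := strictConvexOn_sdelta.sum_map_lt_of_max_lt sdelta_zero monotoneOn_sdelta hsig0 hsl
      hlam.2 univ a (mem_univ _) (fun i _ ↦ ⟨(hrange i).1, hmono (Nat.zero_le _)⟩) hlt
      (hsum ▸ htotal)
    linarith
  have hsplit := add_sum_erase univ a (mem_univ ⟨0, hn⟩)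
  exact ⟨hlead, by linarith⟩

/-- lengths of shortcuts used by an antipodal pair. For `k ∈ {4,5,6}`,
if `a₁ ≥ … ≥ a_n` lie in `(0,2]` with `∑ aᵢ ≤ π - δ*_k` and `∑ δ(aᵢ) ≥ δ*_k/2`, then
`a₁ ≥ λ_k` and `a₂ + ⋯ + a_n ≤ σ_k`. -/
theorem stmt18 (k : ℕ) (hk : k ∈ ({4, 5, 6} : Set ℕ)) (dstar sig lam : ℝ)
    (hd : dstarSpec k dstar)
    (hsig : sig ∈ Set.Icc (π - dstar - 2) 2)
    (hlam : lam ∈ Set.Icc (π - dstar - 2) 2)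
    (hsl : sig < lam) (hsum : sig + lam = π - dstar)
    (hgs : sdelta sig + sdelta (π - dstar - sig) = dstar / 2)
    (hgl : sdelta lam + sdelta (π - dstar - lam) = dstar / 2)
    (n : ℕ) (hn : 0 < n) (a : Fin n → ℝ) (hmono : Antitone a)
    (hrange : ∀ i, a i ∈ Set.Ioc (0 : ℝ) 2)
    (htotal : ∑ i, a i ≤ π - dstar)
    (hdelta : dstar / 2 ≤ ∑ i, sdelta (a i)) :
    lam ≤ a ⟨0, hn⟩ ∧ ∑ i ∈ Finset.univ.erase ⟨0, hn⟩, a i ≤ sig :=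
  stmt18_general k dstar sig lam hd hsig hlam hsl hsum hgs n hn a hmono hrange htotal hdelta
end
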